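/- Let L ⊆ ℝⁿ be a full-rank lattice and L' ⊆ L a primitive sublattice (L' = L ∩ span(L')). Then μ(L)² ≤ μ(L')² + μ(L/L')², where L/L' is the orthogonal projection of L onto the orthogonal complement of span(L'). -/

import Mathlib

open Metric Submodule
noncomputable section

/-- The covering radius of a lattice (given as a set): the supremum, over points `x` in the
real span of `A`, of the distance from `x` to `A`. -/
def covRad {E : Type*} [NormedAddCommGroup E] [NormedSpace ℝ E] (A : Set E) : ℝ :=
  sSup ((fun x => Metric.infDist x A) '' ((Submodule.span ℝ A : Submodule ℝ E) : Set E))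

/-- The image of the set `A` under the orthogonal projection onto the orthogonal complement
of the real span of `S`. -/
def projPerp {n : ℕ} (S A : Set (EuclideanSpace ℝ (Fin n))) : Set (EuclideanSpace ℝ (Fin n)) :=
  (fun x => ((orthogonalProjection (Submodule.span ℝ S)ᗮ) x : EuclideanSpace ℝ (Fin n))) '' A

/-!
Write `K = span L'` and `P` for the orthogonal projection onto `Kᗮ`. Given `x`, first pick
`ℓ ∈ L` with `P ℓ` close to `P x` (covering radius of `P L`), then `ℓ' ∈ L'` close to the
`K`-component of `x - ℓ` (covering radius of `L'`). The two errors are orthogonal, so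
`‖x - (ℓ + ℓ')‖² < (μ(L') + ε)² + (μ(P L) + ε)²`; letting `ε → 0` gives the claim.
-/

open Filter Topology

theorem covRad_nonneg {E : Type*} [NormedAddCommGroup E] [NormedSpace ℝ E] (A : Set E) :
    0 ≤ covRad A :=
  Real.sSup_nonneg <| by
    rintro _ ⟨x, -, rfl⟩
    exact infDist_nonneg

section CoveringRadius

variable {E : Type*} [NormedAddCommGroup E] [NormedSpace ℝ E] [FiniteDimensional ℝ E]

/-- Rounding the coordinates in a basis of `span ℝ M` drawn from `M` moves a point of the span
by at most the sum of the norms of the basis vectors. -/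
theorem bddAbove_infDist_span (M : Submodule ℤ E) :
    BddAbove ((fun x => infDist x (M : Set E)) '' (span ℝ (M : Set E) : Set E)) := by
  obtain ⟨b, hbM, hbspan, hbli⟩ := exists_linearIndependent ℝ (M : Set E)
  set s := hbli.setFinite.toFinset
  refine ⟨∑ v ∈ s, ‖v‖, ?_⟩
  rintro _ ⟨x, hx, rfl⟩
  rw [SetLike.mem_coe, ← hbspan, ← hbli.setFinite.coe_toFinset] at hx
  obtain ⟨c, -, rfl⟩ := mem_span_finset.mp hx
  have hround : ∑ v ∈ s, (⌊c v⌋ : ℤ) • v ∈ M :=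
    sum_mem fun v hv => zsmul_mem (hbM (hbli.setFinite.mem_toFinset.mp hv)) _
  have hfract : ∑ v ∈ s, c v • v - ∑ v ∈ s, (⌊c v⌋ : ℤ) • v = ∑ v ∈ s, Int.fract (c v) • v := by
    rw [← Finset.sum_sub_distrib]
    refine Finset.sum_congr rfl fun v _ => ?_
    rw [← Int.cast_smul_eq_zsmul ℝ, ← sub_smul, Int.fract]
  calc infDist (∑ v ∈ s, c v • v) M
      ≤ ‖∑ v ∈ s, Int.fract (c v) • v‖ := by
        rw [← hfract, ← dist_eq_norm]
        exact infDist_le_dist_of_mem hround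
    _ ≤ ∑ v ∈ s, ‖v‖ := by
        refine (norm_sum_le _ _).trans (Finset.sum_le_sum fun v _ => ?_)
        rw [norm_smul, Real.norm_of_nonneg (Int.fract_nonneg _)]
        exact mul_le_of_le_one_left (norm_nonneg v) (Int.fract_lt_one _).le

theorem infDist_le_covRad (M : Submodule ℤ E) {x : E} (hx : x ∈ span ℝ (M : Set E)) :
    infDist x (M : Set E) ≤ covRad (M : Set E) :=
  le_csSup (bddAbove_infDist_span M) ⟨x, hx, rfl⟩

theorem exists_dist_lt_of_covRad_lt (M : Submodule ℤ E) {x : E} (hx : x ∈ span ℝ (M : Set E))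
    {r : ℝ} (hr : covRad (M : Set E) < r) : ∃ m ∈ M, dist x m < r :=
  (infDist_lt_iff ⟨0, M.zero_mem⟩).mp ((infDist_le_covRad M hx).trans_lt hr)

end CoveringRadius

section InnerProductSpace

variable {E : Type*} [NormedAddCommGroup E] [InnerProductSpace ℝ E]

theorem Submodule.norm_sub_sq_eq_of_mem (K : Submodule ℝ E) [K.HasOrthogonalProjection]
    (v : E) {y : E} (hy : y ∈ K) :
    ‖v - y‖ ^ 2 = ‖K.starProjection v - y‖ ^ 2 + ‖Kᗮ.starProjection v‖ ^ 2 := by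
  rw [norm_sq_eq_add_norm_sq_starProjection (v - y) K, map_sub, map_sub,
    K.starProjection_eq_self_iff.mpr hy, K.starProjection_orthogonal_apply_eq_zero hy, sub_zero]

variable [FiniteDimensional ℝ E]

theorem covRad_le_sqrt_of_covRad_lt (L L' : Submodule ℤ E) (hle : L' ≤ L) {a b : ℝ}
    (ha : covRad (L' : Set E) < a)
    (hb : covRad ((span ℝ (L' : Set E))ᗮ.starProjection '' L) < b) :
    covRad (L : Set E) ≤ √(a ^ 2 + b ^ 2) := by
  set K := span ℝ (L' : Set E)
  set P := Kᗮ.starProjection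
  refine Real.sSup_le ?_ (Real.sqrt_nonneg _)
  rintro _ ⟨x, hx, rfl⟩
  set PL := L.map (P.toLinearMap.restrictScalars ℤ)
  have hPL : (PL : Set E) = P '' L := map_coe _ _
  have hPx : P x ∈ span ℝ (PL : Set E) := by
    rw [hPL, ← ContinuousLinearMap.coe_coe, span_image]
    exact mem_map_of_mem hx
  rw [← hPL] at hb
  obtain ⟨_, ⟨ℓ, hℓ, rfl⟩, hPℓ⟩ := exists_dist_lt_of_covRad_lt _ hPx hb
  obtain ⟨ℓ', hℓ', hℓ'w⟩ := exists_dist_lt_of_covRad_lt L'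
    (K.starProjection_apply_mem (x - ℓ)) ha
  have hperp : ‖P (x - ℓ)‖ < b := by rwa [map_sub, ← dist_eq_norm]
  have hpar : ‖K.starProjection (x - ℓ) - ℓ'‖ < a := by rwa [← dist_eq_norm]
  have hsq : ‖x - ℓ - ℓ'‖ ^ 2 < a ^ 2 + b ^ 2 := by
    rw [K.norm_sub_sq_eq_of_mem _ (subset_span hℓ')]
    gcongr
  calc infDist x L ≤ dist x (ℓ + ℓ') := infDist_le_dist_of_mem (add_mem hℓ (hle hℓ'))
    _ = √(‖x - ℓ - ℓ'‖ ^ 2) := by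
      rw [dist_eq_norm, sub_add_eq_sub_sub, Real.sqrt_sq (norm_nonneg _)]
    _ ≤ √(a ^ 2 + b ^ 2) := Real.sqrt_le_sqrt hsq.le

end InnerProductSpace

theorem covRad_sq_le_covRad_sq_add_covRad_sq
    (n : ℕ) (L : Submodule ℤ (EuclideanSpace ℝ (Fin n)))
    (L' : Submodule ℤ (EuclideanSpace ℝ (Fin n))) (hle : L' ≤ L) :
    covRad (L : Set (EuclideanSpace ℝ (Fin n))) ^ 2
      ≤ covRad (L' : Set (EuclideanSpace ℝ (Fin n))) ^ 2
        + covRad (projPerp (L' : Set (EuclideanSpace ℝ (Fin n)))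
            (L : Set (EuclideanSpace ℝ (Fin n)))) ^ 2 := by
  set c₁ := covRad (L' : Set (EuclideanSpace ℝ (Fin n)))
  set c₂ := covRad (projPerp (L' : Set (EuclideanSpace ℝ (Fin n)))
    (L : Set (EuclideanSpace ℝ (Fin n))))
  have hbound : ∀ ε > 0, covRad (L : Set (EuclideanSpace ℝ (Fin n)))
      ≤ √((c₁ + ε) ^ 2 + (c₂ + ε) ^ 2) := fun ε hε =>
    covRad_le_sqrt_of_covRad_lt L L' hle (lt_add_of_pos_right c₁ hε)
      (lt_add_of_pos_right c₂ hε)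
  have hlim : Tendsto (fun ε => √((c₁ + ε) ^ 2 + (c₂ + ε) ^ 2)) (𝓝[>] 0)
      (𝓝 √(c₁ ^ 2 + c₂ ^ 2)) := by
    refine tendsto_nhdsWithin_of_tendsto_nhds (Continuous.tendsto' ?_ _ _ (by simp))
    fun_prop
  have hle_sqrt := ge_of_tendsto hlim (eventually_nhdsWithin_of_forall hbound)
  exact (Real.le_sqrt (covRad_nonneg _) (by positivity)).mp hle_sqrt
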